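/- If G is a finite group with at least 3 maximal involutions, then the rainbow connection number of the power graph Γ_G equals |M_G|. -/

import Mathlib

/-- The power graph of a group `G`: distinct elements `x` and `y` are adjacent
iff one is a power of the other. -/
def powerGraph (G : Type*) [Group G] : SimpleGraph G where
  Adj x y := x ≠ y ∧ (x ∈ Subgroup.zpowers y ∨ y ∈ Subgroup.zpowers x)
  symm := ⟨fun x y h => ⟨h.1.symm, h.2.symm⟩⟩
  loopless := ⟨fun x h => h.1 rfl⟩

/-- `ζ` is a rainbow `k`-coloring of `Γ`: every pair of vertices is joined by a
path whose edges receive pairwise distinct colors. -/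
def IsRainbowColoring {V : Type*} (Γ : SimpleGraph V) {k : ℕ} (ζ : Sym2 V → Fin k) : Prop :=
  ∀ u v : V, ∃ p : Γ.Walk u v, p.IsPath ∧ (p.edges.map ζ).Nodup

/-- The rainbow connection number of `Γ`: the least `k` admitting a rainbow
`k`-coloring. -/
noncomputable def rainbowConnection {V : Type*} (Γ : SimpleGraph V) : ℕ :=
  sInf {k : ℕ | ∃ ζ : Sym2 V → Fin k, IsRainbowColoring Γ ζ}

/-- An element `x` is a maximal involution if it has order 2 and the only
cyclic subgroup containing `x` is `⟨x⟩`. -/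
def IsMaximalInvolution {G : Type*} [Group G] (x : G) : Prop :=
  orderOf x = 2 ∧ ∀ g : G, x ∈ Subgroup.zpowers g → Subgroup.zpowers g = Subgroup.zpowers x

/-!
In `Γ_G` the identity is adjacent to every other vertex, and the maximal involutions are exactly
the vertices whose only neighbour is the identity. A rainbow path between two maximal involutions
`x ≠ y` starts with the edge `x — 1` and ends with `1 — y`, so these `|M_G|` spokes receive
pairwise distinct colours.

Conversely, give the spokes `x — 1` with `x ∈ M_G` pairwise distinct colours, every other spoke
`v — 1` the colour `0` or `1`, and every edge avoiding `1` the colour `2` (so `|M_G| ≥ 3` colours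
suffice). Each vertex `v ∉ M_G ∪ {1}` has a neighbour outside `M_G ∪ {1}`, and a two-colouring of
a spanning forest of the graph induced on these vertices chooses the colours `0`/`1` so that some
such neighbour `w` has a spoke of the other colour. Two vertices `u, v` whose spokes differ in
colour are joined by `u — 1 — v`; otherwise `u — 1 — w — v` is rainbow.
-/

namespace SimpleGraph

variable {V : Type*} {Γ : SimpleGraph V}

theorem exists_fin_two_forall_exists_adj_ne (hΓ : ∀ v, ∃ w, Γ.Adj v w) :
    ∃ c : V → Fin 2, ∀ v, ∃ w, Γ.Adj v w ∧ c w ≠ c v := by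
  obtain ⟨F, hFΓ, hF, hreach⟩ := Γ.exists_isAcyclic_reachable_eq_le
  refine ⟨hF.coloringTwo, fun v => ?_⟩
  obtain ⟨w, hvw⟩ := hΓ v
  obtain ⟨p⟩ : F.Reachable v w := hreach ▸ hvw.reachable
  have hp : ¬p.Nil := Walk.not_nil_of_ne hvw.ne
  exact ⟨p.snd, hFΓ (p.adj_snd hp), (hF.coloringTwo.valid (p.adj_snd hp)).symm⟩

theorem exists_fin_two_forall_mem_exists_adj_ne {R : Set V}
    (hR : ∀ v ∈ R, ∃ w ∈ R, Γ.Adj v w) :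
    ∃ c : V → Fin 2, ∀ v ∈ R, ∃ w ∈ R, Γ.Adj v w ∧ c w ≠ c v := by
  classical
  obtain ⟨c, hc⟩ := (Γ.induce R).exists_fin_two_forall_exists_adj_ne fun v => by
    obtain ⟨w, hwR, hvw⟩ := hR v v.2
    exact ⟨⟨w, hwR⟩, hvw⟩
  refine ⟨fun v => if hv : v ∈ R then c ⟨v, hv⟩ else 0, fun v hv => ?_⟩
  obtain ⟨w, hvw, hcw⟩ := hc ⟨v, hv⟩
  exact ⟨w, w.2, hvw, by simpa [hv, w.2] using hcw⟩

section Rainbow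

variable {α : Type*} {ζ : Sym2 V → α}

def RainbowJoined (Γ : SimpleGraph V) (ζ : Sym2 V → α) (u v : V) : Prop :=
  ∃ p : Γ.Walk u v, p.IsPath ∧ (p.edges.map ζ).Nodup

namespace RainbowJoined

variable {u v w x : V}

theorem refl (u : V) : Γ.RainbowJoined ζ u u :=
  ⟨.nil, .nil, by simp⟩

theorem symm (h : Γ.RainbowJoined ζ u v) : Γ.RainbowJoined ζ v u := by
  obtain ⟨p, hp, hζ⟩ := h
  exact ⟨p.reverse, hp.reverse, by rwa [Walk.edges_reverse, List.map_reverse, List.nodup_reverse]⟩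

theorem of_adj (h : Γ.Adj u v) : Γ.RainbowJoined ζ u v :=
  ⟨h.toWalk, by simp [h.ne], by simp⟩

theorem of_adj_adj (huv : Γ.Adj u v) (hvw : Γ.Adj v w) (huw : u ≠ w)
    (hζ : ζ s(u, v) ≠ ζ s(v, w)) : Γ.RainbowJoined ζ u w :=
  ⟨.cons huv (.cons hvw .nil), by simp [huv.ne, hvw.ne, huw], by simp [hζ]⟩

theorem of_adj_adj_adj (huv : Γ.Adj u v) (hvw : Γ.Adj v w) (hwx : Γ.Adj w x)
    (huw : u ≠ w) (hux : u ≠ x) (hvx : v ≠ x) (h₁ : ζ s(u, v) ≠ ζ s(v, w))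
    (h₂ : ζ s(u, v) ≠ ζ s(w, x)) (h₃ : ζ s(v, w) ≠ ζ s(w, x)) : Γ.RainbowJoined ζ u x :=
  ⟨.cons huv (.cons hvw (.cons hwx .nil)), by simp [huv.ne, hvw.ne, hwx.ne, huw, hux, hvx],
    by simp [h₁, h₂, h₃]⟩

end RainbowJoined

end Rainbow

theorem rainbowConnection_eq_of_forall_le {m : ℕ} {ζ : Sym2 V → Fin m}
    (hζ : IsRainbowColoring Γ ζ)
    (hle : ∀ k (ξ : Sym2 V → Fin k), IsRainbowColoring Γ ξ → m ≤ k) :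
    rainbowConnection Γ = m :=
  le_antisymm (Nat.sInf_le ⟨ζ, hζ⟩) (le_csInf ⟨m, ζ, hζ⟩ fun k ⟨ξ, hξ⟩ => hle k ξ hξ)

def hubColoring [DecidableEq V] {α : Type*} (o : V) (κ : V → α) (c : α) : Sym2 V → α :=
  Sym2.lift ⟨fun u v => if u = o then κ v else if v = o then κ u else c, fun u v => by
    dsimp only
    split_ifs <;> simp_all⟩

section Hub

variable {o : V} {M : Set V}

theorem mk_mem_edges_of_forall_adj_eq {x y : V} (hx : ∀ z, Γ.Adj x z → z = o)
    (p : Γ.Walk x y) (hxy : x ≠ y) : s(x, o) ∈ p.edges := by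
  have hp : ¬p.Nil := Walk.not_nil_of_ne hxy
  exact hx _ (p.adj_snd hp) ▸ p.mk_start_snd_mem_edges hp

theorem card_le_of_isRainbowColoring (hM : ∀ x ∈ M, ∀ y, Γ.Adj x y → y = o) {k : ℕ}
    {ζ : Sym2 V → Fin k} (hζ : IsRainbowColoring Γ ζ) : Nat.card M ≤ k := by
  suffices Function.Injective fun x : M => ζ s(x, o) by
    simpa using Nat.card_le_card_of_injective _ this
  intro x y hxy
  by_contra hne
  have hne' : (x : V) ≠ y := Subtype.coe_ne_coe.mpr hne
  obtain ⟨p, -, hp⟩ := hζ x y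
  have hx := mk_mem_edges_of_forall_adj_eq (hM x x.2) p hne'
  have hy := mk_mem_edges_of_forall_adj_eq (hM y y.2) p.reverse hne'.symm
  rw [Walk.edges_reverse, List.mem_reverse] at hy
  exact hne' (Sym2.congr_left.mp (List.inj_on_of_nodup_map hp hx hy hxy))

section

variable [DecidableEq V] {α : Type*} {κ : V → α} {c : α}

@[simp]
theorem hubColoring_mk_left (v : V) : hubColoring o κ c s(o, v) = κ v := by
  simp [hubColoring]

@[simp]
theorem hubColoring_mk_right (v : V) : hubColoring o κ c s(v, o) = κ v := by
  by_cases hv : v = o <;> simp [hubColoring, hv]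

theorem hubColoring_mk_of_ne {u v : V} (hu : u ≠ o) (hv : v ≠ o) :
    hubColoring o κ c s(u, v) = c := by
  simp [hubColoring, hu, hv]

end

theorem isRainbowColoring_hubColoring [DecidableEq V] {m : ℕ} {κ : V → Fin m} {c : Fin m}
    (ho : ∀ v ≠ o, Γ.Adj o v) (hκM : Set.InjOn κ M) (hκc : ∀ v ∉ M, κ v ≠ c)
    (hκ : ∀ v ∉ M, v ≠ o → ∃ w ∉ M, w ≠ o ∧ Γ.Adj w v ∧ κ w ≠ κ v) :
    IsRainbowColoring Γ (hubColoring o κ c) := by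
  have via_partner : ∀ u v, u ≠ o → v ≠ o → u ≠ v → v ∉ M → κ u = κ v →
      Γ.RainbowJoined (hubColoring o κ c) u v := by
    intro u v hu hv huv hvM hκuv
    obtain ⟨w, hwM, hw, hwv, hκw⟩ := hκ v hvM hv
    have huw : u ≠ w := by rintro rfl; exact hκw hκuv
    refine .of_adj_adj_adj (ho u hu).symm (ho w hw) hwv huw huv hv.symm ?_ ?_ ?_ <;>
      simp only [hubColoring_mk_left, hubColoring_mk_right, hubColoring_mk_of_ne hw hv, hκuv]
    exacts [hκw.symm, hκc v hvM, hκc w hwM]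
  show ∀ u v, Γ.RainbowJoined _ u v
  intro u v
  rcases eq_or_ne u v with rfl | huv
  · exact .refl u
  rcases eq_or_ne u o with rfl | hu
  · exact .of_adj (ho v huv.symm)
  rcases eq_or_ne v o with rfl | hv
  · exact .of_adj (ho u hu).symm
  by_cases hκuv : κ u = κ v
  · by_cases hvM : v ∈ M
    · have huM : u ∉ M := fun huM => huv (hκM huM hvM hκuv)
      exact (via_partner v u hv hu huv.symm huM hκuv.symm).symm
    · exact via_partner u v hu hv huv hvM hκuv
  · exact .of_adj_adj (ho u hu).symm (ho v hv) huv (by simpa using hκuv)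

theorem exists_isRainbowColoring_of_forall_ne_adj (ho : ∀ v ≠ o, Γ.Adj o v)
    (hR : ∀ v ∉ M, v ≠ o → ∃ w ∉ M, w ≠ o ∧ Γ.Adj v w) (h3 : 3 ≤ Nat.card M) :
    ∃ ζ : Sym2 V → Fin (Nat.card M), IsRainbowColoring Γ ζ := by
  classical
  obtain ⟨c, hc⟩ := exists_fin_two_forall_mem_exists_adj_ne (R := {v | v ∉ M ∧ v ≠ o})
    fun v ⟨hvM, hv⟩ => by
      obtain ⟨w, hwM, hw, hvw⟩ := hR v hvM hv
      exact ⟨w, ⟨hwM, hw⟩, hvw⟩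
  let e := Nat.equivFinOfCardPos (α := M) (by omega)
  let κ : V → Fin (Nat.card M) := fun v =>
    if hv : v ∈ M then e ⟨v, hv⟩ else Fin.castLE (by omega) (c v)
  refine ⟨hubColoring o κ ⟨2, h3⟩, isRainbowColoring_hubColoring (M := M) ho ?_ ?_ ?_⟩
  · intro x hx y hy hxy
    exact congrArg Subtype.val (e.injective (by simpa [κ, hx, hy] using hxy))
  · intro v hv
    simp only [κ, hv, dite_false, ne_eq, Fin.ext_iff, Fin.val_castLE]
    omega
  · intro v hvM hv
    obtain ⟨w, ⟨hwM, hw⟩, hvw, hcw⟩ := hc v ⟨hvM, hv⟩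
    exact ⟨w, hwM, hw, hvw.symm, by simpa [κ, hvM, hwM] using (Fin.castLE_injective _).ne hcw⟩

end Hub

theorem eq_of_adj_of_neighborSet_eq_singleton {x y o : V} (hx : Γ.neighborSet x = {o})
    (hxy : Γ.Adj x y) : y = o :=
  (hx ▸ hxy : y ∈ ({o} : Set V))

theorem ne_of_neighborSet_eq_singleton {x o : V} (hx : Γ.neighborSet x = {o}) : x ≠ o := by
  rintro rfl
  exact Γ.irrefl (hx.symm ▸ rfl : x ∈ Γ.neighborSet x)

theorem rainbowConnection_eq_card_of_forall_ne_adj {o : V} (ho : ∀ v ≠ o, Γ.Adj o v)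
    (h3 : 3 ≤ Nat.card {x // Γ.neighborSet x = {o}}) :
    rainbowConnection Γ = Nat.card {x // Γ.neighborSet x = {o}} := by
  set M : Set V := {x | Γ.neighborSet x = {o}}
  have hM : ∀ x ∈ M, ∀ y, Γ.Adj x y → y = o := fun _ hx _ =>
    eq_of_adj_of_neighborSet_eq_singleton hx
  have hR : ∀ v ∉ M, v ≠ o → ∃ w ∉ M, w ≠ o ∧ Γ.Adj v w := by
    intro v hvM hv
    obtain ⟨w, hvw, hw⟩ : ∃ w, Γ.Adj v w ∧ w ≠ o := by
      by_contra! hall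
      exact hvM (Set.eq_singleton_iff_unique_mem.mpr ⟨(ho v hv).symm, hall⟩)
    refine ⟨w, fun hwM => hv ?_, hw, hvw⟩
    exact hM w hwM v hvw.symm
  obtain ⟨ζ, hζ⟩ := exists_isRainbowColoring_of_forall_ne_adj ho hR h3
  exact rainbowConnection_eq_of_forall_le hζ fun _ _ => card_le_of_isRainbowColoring hM

end SimpleGraph

section PowerGraph

variable {G : Type*} [Group G]

theorem powerGraph_adj_one {x : G} (hx : x ≠ 1) : (powerGraph G).Adj 1 x :=
  ⟨hx.symm, .inl (Subgroup.one_mem _)⟩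

theorem eq_one_or_eq_of_mem_zpowers_of_orderOf_eq_two {x y : G} (hx : orderOf x = 2)
    (hy : y ∈ Subgroup.zpowers x) : y = 1 ∨ y = x := by
  obtain ⟨k, rfl⟩ := hy
  show x ^ k = 1 ∨ x ^ k = x
  rw [← zpow_mod_orderOf, hx]
  rcases Int.emod_two_eq_zero_or_one k with h | h <;> simp [h]

theorem IsMaximalInvolution.powerGraph_neighborSet_eq {x : G} (hx : IsMaximalInvolution x) :
    (powerGraph G).neighborSet x = {1} := by
  have hx1 : x ≠ 1 := fun h => by simpa [h] using hx.1
  refine Set.eq_singleton_iff_unique_mem.mpr ⟨(powerGraph_adj_one hx1).symm, fun y hxy => ?_⟩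
  have hy : y ∈ Subgroup.zpowers x := hxy.2.elim (fun h => hx.2 y h ▸ Subgroup.mem_zpowers y) id
  exact (eq_one_or_eq_of_mem_zpowers_of_orderOf_eq_two hx.1 hy).resolve_right hxy.1.symm

theorem isMaximalInvolution_of_powerGraph_neighborSet_eq {x : G}
    (hx : (powerGraph G).neighborSet x = {1}) : IsMaximalInvolution x := by
  have hx1 : x ≠ 1 := (powerGraph G).ne_of_neighborSet_eq_singleton hx
  have hinv : x⁻¹ = x := by
    by_contra hne
    have hadj : (powerGraph G).Adj x x⁻¹ := ⟨Ne.symm hne, .inr (inv_mem (Subgroup.mem_zpowers x))⟩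
    exact hx1 (inv_eq_one.mp ((powerGraph G).eq_of_adj_of_neighborSet_eq_singleton hx hadj))
  refine ⟨orderOf_eq_prime (by rw [sq, ← inv_eq_iff_mul_eq_one.mp hinv]) hx1, fun g hg => ?_⟩
  rcases eq_or_ne g x with rfl | hgx
  · rfl
  · obtain rfl : g = 1 :=
      (powerGraph G).eq_of_adj_of_neighborSet_eq_singleton hx ⟨hgx.symm, .inl hg⟩
    exact absurd (by simpa using hg) hx1

theorem isMaximalInvolution_iff_powerGraph_neighborSet_eq {x : G} :
    IsMaximalInvolution x ↔ (powerGraph G).neighborSet x = {1} :=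
  ⟨IsMaximalInvolution.powerGraph_neighborSet_eq, isMaximalInvolution_of_powerGraph_neighborSet_eq⟩

end PowerGraph

theorem rc_powerGraph_eq_card_maximalInvolutions_general
    (G : Type*) [Group G]
    (h : 3 ≤ Nat.card {x : G // IsMaximalInvolution x}) :
    rainbowConnection (powerGraph G) = Nat.card {x : G // IsMaximalInvolution x} := by
  simp only [isMaximalInvolution_iff_powerGraph_neighborSet_eq] at h ⊢
  exact SimpleGraph.rainbowConnection_eq_card_of_forall_ne_adj (fun _ => powerGraph_adj_one) h

theorem rc_powerGraph_eq_card_maximalInvolutions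
    (G : Type*) [Group G] [Fintype G]
    (h : 3 ≤ Nat.card {x : G // IsMaximalInvolution x}) :
    rainbowConnection (powerGraph G) = Nat.card {x : G // IsMaximalInvolution x} :=
  rc_powerGraph_eq_card_maximalInvolutions_general G h
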